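/- Let V be a nonempty finite type, T ≥ 1, and for each t = 1,…,T let K_t : V → V → ℝ be a Markov transition kernel on V with K_t(x,y) > 0 for all x,y. Fix β > 0, r : V → ℝ, and define partial rewards r_0 := r and r_t(x) := β·log( Σ_{x_0,…,x_{t-1}} (∏_{u=1}^{t} K_u(x_u,x_{u-1}))·exp(r(x_0)/β) ) at x_t = x. For 1 ≤ t ≤ T and x ∈ V, define p*_t(y|x) := K_t(x,y)·exp((r_{t-1}(y) − r_t(x))/β). Then p*_t(·|x) is a PMF on V and is the unique maximizer over PMFs p of the per-step objective Σ_{y∈V} p(y)·r_{t-1}(y) − β·D(p‖K_t(x,·)). -/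
import Mathlib


noncomputable section

/-- Extend a path `x_0,…,x_{t-1}` (given by `path : Fin t → V`) to all of `ℕ`
by setting `x_i = x` for every `i ≥ t`; in particular the endpoint is `x_t = x`. -/
def seqExt {V : Type*} {t : ℕ} (path : Fin t → V) (x : V) (i : ℕ) : V :=
  if h : i < t then path ⟨i, h⟩ else x

/-- `pathSum K r β t x = Σ_{x_0,…,x_{t-1} ∈ V} (∏_{u=1}^{t} K_u(x_u, x_{u-1})) · exp(r(x_0)/β)`,
evaluated at `x_t = x`. -/
def pathSum {V : Type*} [Fintype V] (K : ℕ → V → V → ℝ) (r : V → ℝ) (β : ℝ)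
    (t : ℕ) (x : V) : ℝ :=
  ∑ path : Fin t → V,
    (∏ u ∈ Finset.range t, K (u + 1) (seqExt path x (u + 1)) (seqExt path x u)) *
      Real.exp (r (seqExt path x 0) / β)

/-- The partial rewards: `r_0 := r` and `r_t(x) := β · log(pathSum K r β t x)` for `t ≥ 1`. -/
def partialReward {V : Type*} [Fintype V] (K : ℕ → V → V → ℝ) (r : V → ℝ) (β : ℝ) :
    ℕ → V → ℝ
  | 0 => r
  | t + 1 => fun x => β * Real.log (pathSum K r β (t + 1) x)

end


lemma seqExt_snoc {V : Type*} {s : ℕ} (p : Fin s → V) (y x : V) (u : ℕ) (hu : u ≤ s) :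
    seqExt (Fin.snoc p y) x u = seqExt p y u := by
  unfold seqExt
  rcases lt_or_eq_of_le hu with h | h
  · rw [dif_pos h, dif_pos (Nat.lt_succ_of_lt h)]
    simp [Fin.snoc, h]
  · subst h
    rw [dif_pos (Nat.lt_succ_self u), dif_neg (lt_irrefl u)]
    simp [Fin.snoc]

def snocEquiv (V : Type*) (s : ℕ) : (Fin s → V) × V ≃ (Fin (s+1) → V) where
  toFun := fun pv => Fin.snoc pv.1 pv.2
  invFun := fun f => (Fin.init f, f (Fin.last s))
  left_inv := by rintro ⟨p, y⟩; simp
  right_inv := by intro f; simp [Fin.snoc_init_self]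

lemma pathSum_zero {V : Type*} [Fintype V] (K : ℕ → V → V → ℝ) (r : V → ℝ) (β : ℝ)
    (x : V) : pathSum K r β 0 x = Real.exp (r x / β) := by
  simp [pathSum, seqExt]

lemma pathSum_succ {V : Type*} [Fintype V] (K : ℕ → V → V → ℝ) (r : V → ℝ) (β : ℝ)
    (s : ℕ) (x : V) :
    pathSum K r β (s + 1) x = ∑ y, K (s + 1) x y * pathSum K r β s y := by
  rw [pathSum, ← Equiv.sum_comp (snocEquiv V s), Fintype.sum_prod_type_right]
  refine Finset.sum_congr rfl fun y _ => ?_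
  rw [pathSum, Finset.mul_sum]
  refine Finset.sum_congr rfl fun p _ => ?_
  simp only [snocEquiv, Equiv.coe_fn_mk]
  have h0 : seqExt (Fin.snoc p y : Fin (s+1) → V) x 0 = seqExt p y 0 :=
    seqExt_snoc p y x 0 (Nat.zero_le s)
  have hprod : (∏ u ∈ Finset.range (s+1),
        K (u+1) (seqExt (Fin.snoc p y : Fin (s+1) → V) x (u+1))
          (seqExt (Fin.snoc p y : Fin (s+1) → V) x u))
      = (∏ u ∈ Finset.range s, K (u+1) (seqExt p y (u+1)) (seqExt p y u)) * K (s+1) x y := by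
    rw [Finset.prod_range_succ]
    congr 1
    · refine Finset.prod_congr rfl fun u hu => ?_
      rw [Finset.mem_range] at hu
      rw [seqExt_snoc p y x (u+1) hu, seqExt_snoc p y x u (le_of_lt hu)]
    · rw [seqExt_snoc p y x s le_rfl]
      simp [seqExt]
  rw [hprod, h0]
  ring

lemma pathSum_pos {V : Type*} [Fintype V] [Nonempty V] {T : ℕ} (K : ℕ → V → V → ℝ)
    (hK_pos : ∀ t, 1 ≤ t → t ≤ T → ∀ x y, 0 < K t x y) (r : V → ℝ) (β : ℝ) :
    ∀ t, t ≤ T → ∀ x, 0 < pathSum K r β t x := by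
  intro t
  induction t with
  | zero => intro _ x; rw [pathSum_zero]; exact Real.exp_pos _
  | succ s ih =>
    intro hle x
    rw [pathSum_succ]
    refine Finset.sum_pos (fun y _ => mul_pos
      (hK_pos (s+1) (Nat.succ_le_succ (Nat.zero_le s)) hle x y)
      (ih (Nat.le_of_succ_le hle) y)) Finset.univ_nonempty

lemma exp_partialReward {V : Type*} [Fintype V] [Nonempty V] {T : ℕ} (K : ℕ → V → V → ℝ)
    (hK_pos : ∀ t, 1 ≤ t → t ≤ T → ∀ x y, 0 < K t x y) (r : V → ℝ) {β : ℝ} (hβ : 0 < β)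
    (t : ℕ) (ht : t ≤ T) (x : V) :
    Real.exp (partialReward K r β t x / β) = pathSum K r β t x := by
  cases t with
  | zero => rw [pathSum_zero]; rfl
  | succ s =>
    show Real.exp (β * Real.log (pathSum K r β (s+1) x) / β) = _
    rw [mul_comm β, mul_div_assoc, div_self (ne_of_gt hβ), mul_one,
      Real.exp_log (pathSum_pos K hK_pos r β (s+1) ht x)]

lemma gibbs {V : Type*} [Fintype V] (p q : V → ℝ) (hp : ∀ y, 0 ≤ p y) (hps : ∑ y, p y = 1)
    (hq : ∀ y, 0 < q y) (hqs : ∑ y, q y = 1) :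
    ∑ y, p y * Real.log (q y / p y) ≤ 0 ∧
      ((∑ y, p y * Real.log (q y / p y)) = 0 ↔ p = q) := by
  have hterm : ∀ y, p y * Real.log (q y / p y) ≤ q y - p y := by
    intro y
    rcases eq_or_lt_of_le (hp y) with h | h
    · rw [← h]; simpa using (hq y).le
    · have hpos : 0 < q y / p y := div_pos (hq y) h
      calc p y * Real.log (q y / p y) ≤ p y * (q y / p y - 1) :=
            mul_le_mul_of_nonneg_left (Real.log_le_sub_one_of_pos hpos) (hp y)
        _ = q y - p y := by field_simp
  have hsum : ∑ y, p y * Real.log (q y / p y) ≤ ∑ y, (q y - p y) :=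
    Finset.sum_le_sum fun y _ => hterm y
  have hzero : ∑ y, (q y - p y) = 0 := by rw [Finset.sum_sub_distrib, hps, hqs]; ring
  refine ⟨by linarith, ?_, ?_⟩
  · intro heq
    have hall : ∀ y ∈ Finset.univ, p y * Real.log (q y / p y) = q y - p y := by
      by_contra hcon
      push_neg at hcon
      obtain ⟨y, hy, hne⟩ := hcon
      have hlt : ∑ z, p z * Real.log (q z / p z) < ∑ z, (q z - p z) :=
        Finset.sum_lt_sum (fun z _ => hterm z) ⟨y, hy, lt_of_le_of_ne (hterm y) hne⟩
      rw [heq, hzero] at hlt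
      exact lt_irrefl 0 hlt
    funext y
    have hy := hall y (Finset.mem_univ y)
    rcases eq_or_lt_of_le (hp y) with h | h
    · exfalso
      rw [← h] at hy
      simp at hy
      exact absurd hy.symm (ne_of_gt (hq y))
    · have hpos : 0 < q y / p y := div_pos (hq y) h
      by_contra hne
      have hne' : q y / p y ≠ 1 := by
        intro h1
        rw [div_eq_one_iff_eq (ne_of_gt h)] at h1
        exact hne h1.symm
      have hlog := Real.log_lt_sub_one_of_pos hpos hne'
      have hlt : p y * Real.log (q y / p y) < q y - p y := by
        calc p y * Real.log (q y / p y) < p y * (q y / p y - 1) :=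
              (mul_lt_mul_iff_right₀ h).mpr hlog
          _ = q y - p y := by field_simp
      linarith
  · intro heq
    rw [heq]
    exact Finset.sum_eq_zero fun y _ => by
      rw [div_self (hq y).ne', Real.log_one, mul_zero]


/-- KL divergence between two finitely supported distributions,
with the convention `0 · log 0 = 0` (automatic since `Real.log 0 = 0`). -/
noncomputable def klDiv {V : Type*} [Fintype V] (p q : V → ℝ) : ℝ :=
  ∑ x, p x * Real.log (p x / q x)

/-- The per-step optimal conditional `p*_t(y|x) = K_t(x,y)·exp((r_{t-1}(y) − r_t(x))/β)`
is a PMF on `V` and the unique maximizer over PMFs `p` of the per-step objective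
`Σ_y p(y)·r_{t-1}(y) − β·D(p‖K_t(x,·))`, for every `1 ≤ t ≤ T` and every `x`. -/
theorem optimal_per_step_conditional
    {V : Type*} [Fintype V] [Nonempty V]
    (T : ℕ) (hT : 1 ≤ T)
    (K : ℕ → V → V → ℝ)
    (hK_pos : ∀ t, 1 ≤ t → t ≤ T → ∀ x y, 0 < K t x y)
    (hK_sum : ∀ t, 1 ≤ t → t ≤ T → ∀ x, ∑ y, K t x y = 1)
    (β : ℝ) (hβ : 0 < β) (r : V → ℝ)
    (pstar : ℕ → V → V → ℝ)
    (hpstar : ∀ t x y, pstar t x y =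
      K t x y * Real.exp ((partialReward K r β (t - 1) y - partialReward K r β t x) / β)) :
    ∀ t, 1 ≤ t → t ≤ T → ∀ x : V,
      ((∀ y, 0 ≤ pstar t x y) ∧ ∑ y, pstar t x y = 1) ∧
      ∀ p : V → ℝ, (∀ y, 0 ≤ p y) → (∑ y, p y = 1) →
        (∑ y, p y * partialReward K r β (t - 1) y - β * klDiv p (K t x) ≤
          ∑ y, pstar t x y * partialReward K r β (t - 1) y - β * klDiv (pstar t x) (K t x)) ∧
        (∑ y, p y * partialReward K r β (t - 1) y - β * klDiv p (K t x) =
          ∑ y, pstar t x y * partialReward K r β (t - 1) y - β * klDiv (pstar t x) (K t x) ↔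
          p = pstar t x) := by
  intro t ht1 htT x
  obtain ⟨s, rfl⟩ : ∃ s, t = s + 1 := ⟨t - 1, (Nat.succ_pred_eq_of_pos ht1).symm⟩
  simp only [Nat.add_sub_cancel]
  set r' := partialReward K r β s with hr'
  set R := partialReward K r β (s + 1) x with hRdef
  set q := K (s + 1) x with hqdef
  have hqpos : ∀ y, 0 < q y := fun y => hK_pos (s+1) ht1 htT x y
  have hqsum : ∑ y, q y = 1 := hK_sum (s+1) ht1 htT x
  have hkey : ∑ y, q y * Real.exp (r' y / β) = Real.exp (R / β) := by
    rw [hRdef, exp_partialReward K hK_pos r hβ (s+1) htT x, pathSum_succ]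
    exact Finset.sum_congr rfl fun y _ => by
      rw [hr', exp_partialReward K hK_pos r hβ s (Nat.le_of_succ_le htT) y]
  have hpstar_eq : ∀ y,
      pstar (s+1) x y = q y * Real.exp (r' y / β) * Real.exp (-(R / β)) := by
    intro y
    rw [hpstar]
    simp only [Nat.add_sub_cancel]
    rw [sub_div, Real.exp_sub, Real.exp_neg]
    rw [← hr', ← hRdef, ← hqdef]
    ring
  have hpstar_pos : ∀ y, 0 < pstar (s+1) x y := by
    intro y
    rw [hpstar_eq y]
    exact mul_pos (mul_pos (hqpos y) (Real.exp_pos _)) (Real.exp_pos _)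
  have hpstar_sum : ∑ y, pstar (s+1) x y = 1 := by
    calc ∑ y, pstar (s+1) x y
        = (∑ y, q y * Real.exp (r' y / β)) * Real.exp (-(R / β)) := by
          rw [Finset.sum_mul]
          exact Finset.sum_congr rfl fun y _ => hpstar_eq y
      _ = 1 := by rw [hkey, ← Real.exp_add]; simp
  have hobj : ∀ p : V → ℝ, (∀ y, 0 ≤ p y) → (∑ y, p y = 1) →
      ∑ y, p y * r' y - β * klDiv p q
        = R + β * ∑ y, p y * Real.log (pstar (s+1) x y / p y) := by
    intro p hp hps
    have hterm : ∀ y ∈ Finset.univ, p y * r' y - β * (p y * Real.log (p y / q y))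
        = p y * R + β * (p y * Real.log (pstar (s+1) x y / p y)) := by
      intro y _
      rcases eq_or_lt_of_le (hp y) with h | h
      · rw [← h]; ring
      · rw [hpstar_eq y, Real.log_div
            (ne_of_gt (mul_pos (mul_pos (hqpos y) (Real.exp_pos _)) (Real.exp_pos _)))
            (ne_of_gt h),
          Real.log_mul (ne_of_gt (mul_pos (hqpos y) (Real.exp_pos _))) (Real.exp_ne_zero _),
          Real.log_mul (ne_of_gt (hqpos y)) (Real.exp_ne_zero _),
          Real.log_exp, Real.log_exp,
          Real.log_div (ne_of_gt h) (ne_of_gt (hqpos y))]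
        field_simp
        ring
    rw [klDiv, Finset.mul_sum, ← Finset.sum_sub_distrib,
      Finset.sum_congr rfl hterm, Finset.sum_add_distrib, ← Finset.sum_mul, hps,
      ← Finset.mul_sum]
    ring
  refine ⟨⟨fun y => (hpstar_pos y).le, hpstar_sum⟩, ?_⟩
  intro p hp hps
  have hG := gibbs p (pstar (s+1) x) hp hps hpstar_pos hpstar_sum
  have hGstar : ∑ y, pstar (s+1) x y * Real.log (pstar (s+1) x y / pstar (s+1) x y) = 0 :=
    Finset.sum_eq_zero fun y _ => by
      rw [div_self (hpstar_pos y).ne', Real.log_one, mul_zero]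
  have hfp := hobj p hp hps
  have hfstar := hobj (pstar (s+1) x) (fun y => (hpstar_pos y).le) hpstar_sum
  rw [hGstar, mul_zero, add_zero] at hfstar
  rw [hfp, hfstar]
  have hGle := hG.1
  constructor
  · nlinarith
  constructor
  · intro h
    have hβG : β * ∑ y, p y * Real.log (pstar (s+1) x y / p y) = 0 := by linarith
    have : ∑ y, p y * Real.log (pstar (s+1) x y / p y) = 0 := by
      rcases mul_eq_zero.mp hβG with h' | h'
      · exact absurd h' (ne_of_gt hβ)
      · exact h'
    exact hG.2.mp this
  · intro h
    rw [hG.2.mpr h, mul_zero, add_zero]
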